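/- arXiv:1805.05272 — 5 statements merged into one kernel-verified Lean document; each statement's English description precedes it below -/
import Mathlib

section
/- Let φ : S → T be a premorphism between inverse monoids (φ(1)=1 and φ(s)φ(t) ≤ φ(st)). Then φ is strong (i.e. φ(s)φ(t) = φ(s)φ(s)⁻¹ φ(st) = φ(st) φ(t)⁻¹φ(t) for all s, t) if and only if φ satisfies both: (i) φ(s⁻¹) = φ(s)⁻¹ for all s, and (ii) s ≤ t implies φ(s) ≤ φ(t). -/
/-- A restriction monoid: a monoid with unary operations `rstar` (`^*`) and
`rplus` (`^+`) satisfying the standard two-sided restriction monoid axioms. -/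
class RestrictionMonoid (S : Type*) extends Monoid S where
  rstar : S → S
  rplus : S → S
  mul_rstar : ∀ x : S, x * rstar x = x
  rstar_comm : ∀ x y : S, rstar x * rstar y = rstar y * rstar x
  rstar_mul_rstar : ∀ x y : S, rstar (x * rstar y) = rstar x * rstar y
  rstar_left : ∀ x y : S, rstar x * y = y * rstar (x * y)
  rplus_mul : ∀ x : S, rplus x * x = x
  rplus_comm : ∀ x y : S, rplus x * rplus y = rplus y * rplus x
  rplus_mul_rplus : ∀ x y : S, rplus (rplus x * y) = rplus x * rplus y
  mul_rplus : ∀ x y : S, x * rplus y = rplus (x * y) * x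
  rstar_rplus : ∀ x : S, rstar (rplus x) = rplus x
  rplus_rstar : ∀ x : S, rplus (rstar x) = rstar x

open RestrictionMonoid

/-- A projection of a restriction monoid: an element of the form `x^*`. -/
def isProj {S : Type*} [RestrictionMonoid S] (e : S) : Prop := ∃ a : S, rstar a = e

/-- The natural partial order on a restriction monoid: `a ≤ b` iff `a = e * b`
for some projection `e`. -/
def rle {S : Type*} [RestrictionMonoid S] (a b : S) : Prop :=
  ∃ e : S, isProj e ∧ a = e * b

section InverseMonoidPremorphisms

variable {S : Type*} [Monoid S] {T : Type*} [Monoid T]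

/-- The natural partial order on an inverse monoid: `a ≤ b` iff `a = e b`
for some idempotent `e`. -/
def ile {X : Type*} [Monoid X] (a b : X) : Prop := ∃ e : X, e * e = e ∧ a = e * b

/-- Axioms making a monoid with a unary operation an inverse monoid. -/
structure InvAx (X : Type*) [Monoid X] (iv : X → X) : Prop where
  invol : ∀ a : X, iv (iv a) = a
  reg : ∀ a : X, a * iv a * a = a
  reg' : ∀ a : X, iv a * a * iv a = iv a
  comm : ∀ a b : X, a * iv a * (b * iv b) = b * iv b * (a * iv a)

namespace InvAx

variable {X : Type*} [Monoid X] {iv : X → X}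

def IsD (iv : X → X) (p : X) : Prop := ∃ x : X, p = x * iv x

theorem isD_mul_inv (_h : InvAx X iv) (a : X) : IsD iv (a * iv a) := ⟨a, rfl⟩

theorem isD_inv_mul (h : InvAx X iv) (a : X) : IsD iv (iv a * a) :=
  ⟨iv a, by rw [h.invol]⟩

theorem D_comm (h : InvAx X iv) {p q : X} (hp : IsD iv p) (hq : IsD iv q) :
    p * q = q * p := by
  obtain ⟨x, rfl⟩ := hp; obtain ⟨y, rfl⟩ := hq
  exact h.comm x y

theorem D_idem (h : InvAx X iv) {p : X} (hp : IsD iv p) : p * p = p := by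
  obtain ⟨x, rfl⟩ := hp
  rw [← mul_assoc, h.reg]

theorem idem_mul (_h : InvAx X iv) {A B : X} (hA : A * A = A) (hB : B * B = B)
    (hAB : A * B = B * A) : (A * B) * (A * B) = A * B := by
  calc (A * B) * (A * B) = A * ((B * A) * B) := by simp only [mul_assoc]
    _ = A * ((A * B) * B) := by rw [hAB]
    _ = (A * A) * (B * B) := by simp only [mul_assoc]
    _ = A * B := by rw [hA, hB]

theorem mul_inv_mul (h : InvAx X iv) (a : X) : a * (iv a * a) = a := by
  rw [← mul_assoc, h.reg]

theorem inv_decomp (h : InvAx X iv) {e : X} (he : e * e = e) :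
    iv e = (iv e * e) * (e * iv e) := by
  calc iv e = iv e * e * iv e := (h.reg' e).symm
    _ = iv e * (e * e) * iv e := by rw [he]
    _ = (iv e * e) * (e * iv e) := by simp only [mul_assoc]

theorem inv_of_idem (h : InvAx X iv) {e : X} (he : e * e = e) : iv e = e := by
  have h1 := h.inv_decomp he
  have hA : IsD iv (iv e * e) := h.isD_inv_mul e
  have hB : IsD iv (e * iv e) := h.isD_mul_inv e
  have h2 : iv e * iv e = iv e := by
    rw [h1]
    exact h.idem_mul (h.D_idem hA) (h.D_idem hB) (h.D_comm hA hB)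
  have h3 := h.inv_decomp h2
  rw [h.invol] at h3
  calc iv e = (iv e * e) * (e * iv e) := h1
    _ = (e * iv e) * (iv e * e) := h.D_comm hA hB
    _ = e := h3.symm

theorem idem_isD (h : InvAx X iv) {e : X} (he : e * e = e) : IsD iv e :=
  ⟨e, by rw [h.inv_of_idem he, he]⟩

theorem idem_comm (h : InvAx X iv) {e f : X} (he : e * e = e) (hf : f * f = f) :
    e * f = f * e :=
  h.D_comm (h.idem_isD he) (h.idem_isD hf)

theorem inv_unique (h : InvAx X iv) {a x : X} (hx1 : x * a * x = x)
    (hx2 : a * x * a = a) : x = iv a := by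
  have hax : (a * x) * (a * x) = a * x := by
    calc (a * x) * (a * x) = (a * x * a) * x := by simp only [mul_assoc]
      _ = a * x := by rw [hx2]
  have hxa : (x * a) * (x * a) = x * a := by
    calc (x * a) * (x * a) = (x * a * x) * a := by simp only [mul_assoc]
      _ = x * a := by rw [hx1]
  have step1 : x = x * (a * iv a) := by
    calc x = x * a * x := hx1.symm
      _ = x * (a * iv a * a) * x := by rw [h.reg a]
      _ = x * ((a * iv a) * (a * x)) := by simp only [mul_assoc]
      _ = x * ((a * x) * (a * iv a)) := by
          rw [h.idem_comm (h.D_idem (h.isD_mul_inv a)) hax]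
      _ = (x * a * x) * (a * iv a) := by simp only [mul_assoc]
      _ = x * (a * iv a) := by rw [hx1]
  have step2 : iv a = x * (a * iv a) := by
    calc iv a = iv a * a * iv a := (h.reg' a).symm
      _ = iv a * (a * x * a) * iv a := by rw [hx2]
      _ = ((iv a * a) * (x * a)) * iv a := by simp only [mul_assoc]
      _ = ((x * a) * (iv a * a)) * iv a := by
          rw [h.idem_comm (h.D_idem (h.isD_inv_mul a)) hxa]
      _ = x * (a * ((iv a * a) * iv a)) := by simp only [mul_assoc]
      _ = x * (a * iv a) := by rw [h.reg' a]
  exact step1.trans step2.symm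

theorem inv_mul (h : InvAx X iv) (a b : X) : iv (a * b) = iv b * iv a := by
  symm
  apply h.inv_unique
  · calc (iv b * iv a) * (a * b) * (iv b * iv a)
        = iv b * ((iv a * a) * (b * iv b)) * iv a := by simp only [mul_assoc]
      _ = iv b * ((b * iv b) * (iv a * a)) * iv a := by
          rw [h.D_comm (h.isD_inv_mul a) (h.isD_mul_inv b)]
      _ = (iv b * b * iv b) * (iv a * a * iv a) := by simp only [mul_assoc]
      _ = iv b * iv a := by rw [h.reg', h.reg']
  · calc (a * b) * (iv b * iv a) * (a * b)
        = a * ((b * iv b) * (iv a * a)) * b := by simp only [mul_assoc]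
      _ = a * ((iv a * a) * (b * iv b)) * b := by
          rw [h.D_comm (h.isD_mul_inv b) (h.isD_inv_mul a)]
      _ = (a * iv a * a) * (b * iv b * b) := by simp only [mul_assoc]
      _ = a * b := by rw [h.reg, h.reg]

theorem conj_idem (h : InvAx X iv) {e : X} (he : e * e = e) (a : X) :
    (a * e * iv a) * (a * e * iv a) = a * e * iv a := by
  have hc : e * (iv a * a) = (iv a * a) * e :=
    h.idem_comm he (h.D_idem (h.isD_inv_mul a))
  calc (a * e * iv a) * (a * e * iv a)
      = a * ((e * (iv a * a)) * (e * iv a)) := by simp only [mul_assoc]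
    _ = a * (((iv a * a) * e) * (e * iv a)) := by rw [hc]
    _ = (a * (iv a * a)) * ((e * e) * iv a) := by simp only [mul_assoc]
    _ = a * (e * iv a) := by rw [he, h.mul_inv_mul]
    _ = a * e * iv a := by rw [← mul_assoc]

theorem ile_to_left (h : InvAx X iv) {a b : X} (hab : ile a b) :
    a = a * iv a * b := by
  obtain ⟨e, he, hab⟩ := hab
  have hinva : iv a = iv b * e := by rw [hab, h.inv_mul, h.inv_of_idem he]
  have hc : (b * iv b) * e = e * (b * iv b) :=
    h.idem_comm (h.D_idem (h.isD_mul_inv b)) he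
  have key : a * iv a * b = a := by
    calc a * iv a * b = e * ((b * iv b) * e) * b := by
          rw [hinva, hab]; simp only [mul_assoc]
      _ = e * (e * (b * iv b)) * b := by rw [hc]
      _ = (e * e) * ((b * iv b) * b) := by simp only [mul_assoc]
      _ = e * b := by rw [he, h.reg]
      _ = a := hab.symm
  exact key.symm

theorem ile_of_right (h : InvAx X iv) {a b f : X} (hf : f * f = f)
    (hab : a = b * f) : ile a b := by
  refine ⟨b * f * iv b, h.conj_idem hf b, ?_⟩
  have key : (b * f * iv b) * b = b * f := by
    calc (b * f * iv b) * b = b * (f * (iv b * b)) := by simp only [mul_assoc]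
      _ = b * ((iv b * b) * f) := by
          rw [h.idem_comm hf (h.D_idem (h.isD_inv_mul b))]
      _ = (b * (iv b * b)) * f := by rw [← mul_assoc]
      _ = b * f := by rw [h.mul_inv_mul]
  rw [hab, key]

theorem ile_trans (h : InvAx X iv) {a b c : X} (h1 : ile a b) (h2 : ile b c) :
    ile a c := by
  obtain ⟨e, he, h1⟩ := h1; obtain ⟨f, hf, h2⟩ := h2
  exact ⟨e * f, h.idem_mul he hf (h.idem_comm he hf), by rw [h1, h2, mul_assoc]⟩

theorem ile_antisymm (h : InvAx X iv) {a b : X} (h1 : ile a b) (h2 : ile b a) :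
    a = b := by
  obtain ⟨e, he, hab⟩ := h1; obtain ⟨f, hf, hba⟩ := h2
  have ha2 : a = (e * f) * a := by rw [mul_assoc, ← hba, ← hab]
  have hfe : f * (e * f) = e * f := by
    calc f * (e * f) = (f * e) * f := by rw [← mul_assoc]
      _ = (e * f) * f := by rw [h.idem_comm hf he]
      _ = e * (f * f) := by rw [mul_assoc]
      _ = e * f := by rw [hf]
  have key : b = a := by
    calc b = f * a := hba
      _ = f * ((e * f) * a) := by rw [← ha2]
      _ = (f * (e * f)) * a := by rw [← mul_assoc]
      _ = (e * f) * a := by rw [hfe]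
      _ = a := ha2.symm
  exact key.symm

theorem ile_mul_left (h : InvAx X iv) {x y : X} (hxy : ile x y) (a : X) :
    ile (a * x) (a * y) := by
  obtain ⟨e, he, hxe⟩ := hxy
  refine ⟨a * e * iv a, h.conj_idem he a, ?_⟩
  calc a * x = a * (e * y) := by rw [hxe]
    _ = (a * (iv a * a)) * (e * y) := by rw [h.mul_inv_mul]
    _ = a * (((iv a * a) * e) * y) := by simp only [mul_assoc]
    _ = a * ((e * (iv a * a)) * y) := by
        rw [h.idem_comm (h.D_idem (h.isD_inv_mul a)) he]
    _ = (a * e * iv a) * (a * y) := by simp only [mul_assoc]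

theorem ile_mul_right (_h : InvAx X iv) {x y : X} (hxy : ile x y) (a : X) :
    ile (x * a) (y * a) := by
  obtain ⟨e, he, hxe⟩ := hxy
  exact ⟨e, he, by rw [hxe, mul_assoc]⟩

theorem ile_idem_left (_h : InvAx X iv) {e x : X} (he : e * e = e) :
    ile (e * x) x := ⟨e, he, rfl⟩

theorem ile_idem_right (h : InvAx X iv) {x e : X} (he : e * e = e) :
    ile (x * e) x := h.ile_of_right he rfl

end InvAx

/-- Let `S`, `T` be inverse monoids and `φ : S → T` a premorphism
(`φ(1) = 1` and `φ(s)φ(t) ≤ φ(st)`).  Then `φ` is strong, i.e.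
`φ(s)φ(t) = (φ(s)φ(s)⁻¹)φ(st)` and `φ(s)φ(t) = φ(st)(φ(t)⁻¹φ(t))` for all `s,t`,
if and only if `φ` satisfies both (i) `φ(s⁻¹) = φ(s)⁻¹` for all `s`, and
(ii) `s ≤ t` implies `φ(s) ≤ φ(t)`. -/
theorem stmt11 (invS : S → S) (invT : T → T)
    (hSinvol : ∀ a : S, invS (invS a) = a)
    (hSreg : ∀ a : S, a * invS a * a = a)
    (hSreg' : ∀ a : S, invS a * a * invS a = invS a)
    (hScomm : ∀ a b : S, a * invS a * (b * invS b) = b * invS b * (a * invS a))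
    (hTinvol : ∀ a : T, invT (invT a) = a)
    (hTreg : ∀ a : T, a * invT a * a = a)
    (hTreg' : ∀ a : T, invT a * a * invT a = invT a)
    (hTcomm : ∀ a b : T, a * invT a * (b * invT b) = b * invT b * (a * invT a))
    (φ : S → T) (h1 : φ 1 = 1)
    (hpre : ∀ s t : S, ile (φ s * φ t) (φ (s * t))) :
    (∀ s t : S, φ s * φ t = (φ s * invT (φ s)) * φ (s * t) ∧
        φ s * φ t = φ (s * t) * (invT (φ t) * φ t)) ↔
    ((∀ s : S, φ (invS s) = invT (φ s)) ∧
      (∀ s t : S, ile s t → ile (φ s) (φ t))) := by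
  have hS : InvAx S invS := ⟨hSinvol, hSreg, hSreg', hScomm⟩
  have hT : InvAx T invT := ⟨hTinvol, hTreg, hTreg', hTcomm⟩
  constructor
  · intro H
    have hca : ∀ s : S, φ (s * invS s) * φ s = φ s := by
      intro s
      have h2 := (H (s * invS s) s).2
      rw [hSreg s] at h2
      rw [h2, ← mul_assoc, hTreg]
    have hi : ∀ s : S, φ (invS s) = invT (φ s) := by
      intro s
      apply hT.inv_unique
      · have h2 := (H (invS s) s).1
        have hdb : φ (invS s * s) * φ (invS s) = φ (invS s) := by
          have h4 := hca (invS s)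
          rw [hSinvol] at h4
          exact h4
        calc φ (invS s) * φ s * φ (invS s)
            = ((φ (invS s) * invT (φ (invS s))) * φ (invS s * s)) * φ (invS s) := by
              rw [h2]
          _ = (φ (invS s) * invT (φ (invS s))) * (φ (invS s * s) * φ (invS s)) := by
              rw [mul_assoc]
          _ = φ (invS s) * invT (φ (invS s)) * φ (invS s) := by rw [hdb]
          _ = φ (invS s) := hTreg _
      · have h2 := (H s (invS s)).1
        calc φ s * φ (invS s) * φ s
            = ((φ s * invT (φ s)) * φ (s * invS s)) * φ s := by rw [h2]
          _ = (φ s * invT (φ s)) * (φ (s * invS s) * φ s) := by rw [mul_assoc]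
          _ = φ s * invT (φ s) * φ s := by rw [hca]
          _ = φ s := hTreg _
    refine ⟨hi, ?_⟩
    intro s t hst
    have hs1 : s = s * invS s * t := hS.ile_to_left hst
    have he : invS (s * invS s) = s * invS s :=
      hS.inv_of_idem (hS.D_idem (hS.isD_mul_inv s))
    have hcc : invT (φ (s * invS s)) = φ (s * invS s) := by rw [← hi, he]
    have h2 := (H (s * invS s) t).1
    rw [hcc, ← hs1] at h2
    have h3 : φ (s * invS s) * φ (s * invS s) * φ (s * invS s) = φ (s * invS s) := by
      have h4 := hTreg (φ (s * invS s))
      rw [hcc] at h4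
      exact h4
    refine ⟨φ (s * invS s) * φ (s * invS s), ?_, ?_⟩
    · rw [← mul_assoc, h3]
    · have key : (φ (s * invS s) * φ (s * invS s)) * φ t = φ s := by
        calc (φ (s * invS s) * φ (s * invS s)) * φ t
            = φ (s * invS s) * (φ (s * invS s) * φ t) := mul_assoc _ _ _
          _ = φ (s * invS s) * (φ (s * invS s) * φ (s * invS s) * φ s) := by rw [h2]
          _ = φ (s * invS s) * φ (s * invS s) * φ (s * invS s) * φ s := by
              simp only [mul_assoc]
          _ = φ (s * invS s) * φ s := by rw [h3]
          _ = φ s := hca s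
      exact key.symm
  · rintro ⟨hi, hii⟩ s t
    constructor
    · -- left strong
      obtain ⟨e, hee, hpe⟩ := hpre s t
      have h1 : ile (φ s * φ t) ((φ s * invT (φ s)) * φ (s * t)) := by
        refine ⟨e, hee, ?_⟩
        calc φ s * φ t = (φ s * invT (φ s) * φ s) * φ t := by rw [hTreg]
          _ = (φ s * invT (φ s)) * (φ s * φ t) := by simp only [mul_assoc]
          _ = (φ s * invT (φ s)) * (e * φ (s * t)) := by rw [hpe]
          _ = ((φ s * invT (φ s)) * e) * φ (s * t) := by simp only [mul_assoc]
          _ = (e * (φ s * invT (φ s))) * φ (s * t) := by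
              rw [hT.idem_comm (hT.D_idem (hT.isD_mul_inv (φ s))) hee]
          _ = e * ((φ s * invT (φ s)) * φ (s * t)) := by simp only [mul_assoc]
      have h2 : ile ((φ s * invT (φ s)) * φ (s * t)) (φ s * φ t) := by
        have k1 : ile (invT (φ s) * φ (s * t)) (φ t) := by
          have k2 := hpre (invS s) (s * t)
          have k4 : ile (invS s * (s * t)) t := by
            rw [← mul_assoc]
            exact hS.ile_idem_left (hS.D_idem (hS.isD_inv_mul s))
          have k6 := hT.ile_trans k2 (hii _ _ k4)
          rwa [hi s] at k6
        have k7 := hT.ile_mul_left k1 (φ s)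
        rwa [← mul_assoc] at k7
      exact hT.ile_antisymm h1 h2
    · -- right strong
      obtain ⟨e, hee, hpe⟩ := hpre s t
      have h1 : ile (φ s * φ t) (φ (s * t) * (invT (φ t) * φ t)) := by
        refine ⟨e, hee, ?_⟩
        calc φ s * φ t = (φ s * φ t) * (invT (φ t) * φ t) := by
              rw [mul_assoc, ← mul_assoc (φ t), hTreg]
          _ = (e * φ (s * t)) * (invT (φ t) * φ t) := by rw [hpe]
          _ = e * (φ (s * t) * (invT (φ t) * φ t)) := mul_assoc _ _ _
      have h2 : ile (φ (s * t) * (invT (φ t) * φ t)) (φ s * φ t) := by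
        have k1 : ile (φ (s * t) * invT (φ t)) (φ s) := by
          have k2 := hpre (s * t) (invS t)
          have k4 : ile (s * t * invS t) s := by
            rw [mul_assoc]
            exact hS.ile_idem_right (hS.D_idem (hS.isD_mul_inv t))
          have k6 := hT.ile_trans k2 (hii _ _ k4)
          rwa [hi t] at k6
        have k7 := hT.ile_mul_right k1 (φ t)
        rwa [mul_assoc] at k7
      exact hT.ile_antisymm h1 h2

end InverseMonoidPremorphisms
end

section
/- Let T be a monoid, Y a meet-semilattice with top element, and φ : T → I(Y) a premorphism into the symmetric inverse monoid on Y such that each φ(t) is an order-isomorphism between nonempty order ideals of Y. Then the set M(T,Y) = {(y,t) ∈ Y × T : y ∈ ran(φ(t))} with multiplication (x,s)(y,t) = (φ(s)(φ(s)⁻¹(x) ∧ y), st), unary operations (x,s)^* = (φ(s)⁻¹(x), 1), (x,s)^+ = (x, 1), and identity (⊤, 1), is a restriction monoid. -/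
open RestrictionMonoid

section PartialActionProduct

variable {T : Type*} [Monoid T] {Y : Type*} [SemilatticeInf Y] [OrderTop Y]

/-- The underlying set of the partial action product `M(T,Y)`:
pairs `(y,t)` with `y` in the range of `φ(t)`. -/
def Mset (ran : T → Set Y) : Set (Y × T) := {p | p.1 ∈ ran p.2}

/-- Multiplication of `M(T,Y)`: `(x,s)(y,t) = (φ(s)(φ(s)⁻¹(x) ⊓ y), st)`,
where `f s` implements `φ(s)` and `g s` its inverse. -/
def pmul (f g : T → Y → Y) (p q : Y × T) : Y × T :=
  (f p.2 (g p.2 p.1 ⊓ q.1), p.2 * q.2)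

/-- `(x,s)^* = (φ(s)⁻¹(x), 1)`. -/
def pstar (g : T → Y → Y) (p : Y × T) : Y × T := (g p.2 p.1, 1)

/-- `(x,s)^+ = (x, 1)`. -/
def pplus (p : Y × T) : Y × T := (p.1, 1)

/-- The identity element `(⊤, 1)`. -/
def pone : Y × T := (⊤, 1)

/-- Partial action product construction: given a monoid `T`, a semilattice `Y`
with top, and a premorphism `φ : T → I(Y)` (encoded by `dom`, `ran`, `f`, `g`)
whose values are order-isomorphisms between nonempty order ideals of `Y`, the set
`M(T,Y)` with the indicated operations is a restriction monoid. -/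
theorem stmt14 (dom ran : T → Set Y) (f g : T → Y → Y)
    (h1dom : dom (1 : T) = Set.univ) (h1ran : ran (1 : T) = Set.univ)
    (h1f : ∀ y : Y, f 1 y = y) (h1g : ∀ y : Y, g 1 y = y)
    (hmapf : ∀ t y, y ∈ dom t → f t y ∈ ran t)
    (hmapg : ∀ t y, y ∈ ran t → g t y ∈ dom t)
    (hgf : ∀ t y, y ∈ dom t → g t (f t y) = y)
    (hfg : ∀ t y, y ∈ ran t → f t (g t y) = y)
    (hpre : ∀ s t y, y ∈ dom t → f t y ∈ dom s →
      y ∈ dom (s * t) ∧ f (s * t) y = f s (f t y))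
    (hdomIdeal : ∀ t : T, IsLowerSet (dom t)) (hranIdeal : ∀ t : T, IsLowerSet (ran t))
    (horder : ∀ t x y, x ∈ dom t → y ∈ dom t → (x ≤ y ↔ f t x ≤ f t y))
    (hne : ∀ t : T, (dom t).Nonempty) :
    -- closure of the operations
    (pone ∈ Mset ran) ∧
    (∀ p ∈ Mset ran, ∀ q ∈ Mset ran, pmul f g p q ∈ Mset ran) ∧
    (∀ p ∈ Mset ran, pstar g p ∈ Mset ran ∧ pplus p ∈ Mset ran) ∧
    -- monoid axioms
    (∀ p ∈ Mset ran, ∀ q ∈ Mset ran, ∀ r ∈ Mset ran,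
      pmul f g (pmul f g p q) r = pmul f g p (pmul f g q r)) ∧
    (∀ p ∈ Mset ran, pmul f g pone p = p ∧ pmul f g p pone = p) ∧
    -- restriction monoid axioms
    (∀ p ∈ Mset ran, pmul f g p (pstar g p) = p) ∧
    (∀ p ∈ Mset ran, ∀ q ∈ Mset ran,
      pmul f g (pstar g p) (pstar g q) = pmul f g (pstar g q) (pstar g p)) ∧
    (∀ p ∈ Mset ran, ∀ q ∈ Mset ran,
      pstar g (pmul f g p (pstar g q)) = pmul f g (pstar g p) (pstar g q)) ∧
    (∀ p ∈ Mset ran, ∀ q ∈ Mset ran,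
      pmul f g (pstar g p) q = pmul f g q (pstar g (pmul f g p q))) ∧
    (∀ p ∈ Mset ran, pmul f g (pplus p) p = p) ∧
    (∀ p ∈ Mset ran, ∀ q ∈ Mset ran,
      pmul f g (pplus p) (pplus q) = pmul f g (pplus q) (pplus p)) ∧
    (∀ p ∈ Mset ran, ∀ q ∈ Mset ran,
      pplus (pmul f g (pplus p) q) = pmul f g (pplus p) (pplus q)) ∧
    (∀ p ∈ Mset ran, ∀ q ∈ Mset ran,
      pmul f g p (pplus q) = pmul f g (pplus (pmul f g p q)) p) ∧
    (∀ p ∈ Mset ran, pstar g (pplus p) = pplus p) ∧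
    (∀ p ∈ Mset ran, pplus (pstar g p) = pstar g p) := by

  -- basic monotonicity of `f t` on `dom t`
  have hmonof : ∀ t a b, a ∈ dom t → b ∈ dom t → a ≤ b → f t a ≤ f t b :=
    fun t a b ha hb h => (horder t a b ha hb).mp h
  -- monotonicity of `g t` on `ran t`
  have hmonog : ∀ t a b, a ∈ ran t → b ∈ ran t → a ≤ b → g t a ≤ g t b := by
    intro t a b ha hb h
    have h2 := (horder t (g t a) (g t b) (hmapg _ _ ha) (hmapg _ _ hb)).mpr
    rw [hfg t a ha, hfg t b hb] at h2
    exact h2 h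
  -- `f t` preserves meets of elements of `dom t`
  have hfmeet : ∀ t a b, a ∈ dom t → b ∈ dom t → f t (a ⊓ b) = f t a ⊓ f t b := by
    intro t a b ha hb
    have hab : a ⊓ b ∈ dom t := hdomIdeal t inf_le_left ha
    refine le_antisymm (le_inf (hmonof t _ _ hab ha inf_le_left)
      (hmonof t _ _ hab hb inf_le_right)) ?_
    have hc : f t a ⊓ f t b ∈ ran t := hranIdeal t inf_le_left (hmapf t a ha)
    have h1 : g t (f t a ⊓ f t b) ≤ a := by
      have h := hmonog t _ _ hc (hmapf t a ha) inf_le_left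
      rwa [hgf t a ha] at h
    have h2 : g t (f t a ⊓ f t b) ≤ b := by
      have h := hmonog t _ _ hc (hmapf t b hb) inf_le_right
      rwa [hgf t b hb] at h
    have h3 := hmonof t _ _ (hmapg t _ hc) hab (le_inf h1 h2)
    rwa [hfg t _ hc] at h3
  -- composition lemma: if `a ∈ ran t ∩ dom s` then `f s a ∈ ran (s*t)` and
  -- `g (s*t) (f s a) = g t a`
  have hcomp : ∀ s t a, a ∈ ran t → a ∈ dom s →
      f s a ∈ ran (s * t) ∧ g (s * t) (f s a) = g t a := by
    intro s t a hat has
    have hb : g t a ∈ dom t := hmapg t a hat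
    have hfb' : f t (g t a) ∈ dom s := by rw [hfg t a hat]; exact has
    obtain ⟨hdm, heq⟩ := hpre s t (g t a) hb hfb'
    rw [hfg t a hat] at heq
    exact ⟨heq ▸ hmapf _ _ hdm, by rw [← heq, hgf _ _ hdm]⟩
  -- the meet `g s x ⊓ y` lies in `dom s` and in `ran t`
  have hAd : ∀ s (x y : Y), x ∈ ran s → g s x ⊓ y ∈ dom s :=
    fun s x y hx => hdomIdeal s inf_le_left (hmapg s x hx)
  have hAr : ∀ t (x y : Y), y ∈ ran t → x ⊓ y ∈ ran t :=
    fun t x y hy => hranIdeal t inf_le_right hy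
  -- closure of multiplication, packaged with the inverse-image formula
  have hmulmem : ∀ s t (x y : Y), x ∈ ran s → y ∈ ran t →
      f s (g s x ⊓ y) ∈ ran (s * t) ∧
      g (s * t) (f s (g s x ⊓ y)) = g t (g s x ⊓ y) :=
    fun s t x y hx hy => hcomp s t _ (hAr t _ y hy) (hAd s x y hx)
  refine ⟨?_, ?_, ?_, ?_, ?_, ?_, ?_, ?_, ?_, ?_, ?_, ?_, ?_, ?_, ?_⟩
  · -- pone ∈ Mset
    show (⊤ : Y) ∈ ran (1 : T)
    rw [h1ran]; trivial
  · -- closure of pmul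
    rintro ⟨x, s⟩ hp ⟨y, t⟩ hq
    exact (hmulmem s t x y hp hq).1
  · -- closure of pstar, pplus
    rintro ⟨x, s⟩ hp
    constructor <;> (show _ ∈ ran (1 : T); rw [h1ran]; trivial)
  · -- associativity
    rintro ⟨x, s⟩ hp ⟨y, t⟩ hq ⟨z, u⟩ hr
    have hx : x ∈ ran s := hp
    have hy : y ∈ ran t := hq
    set A := g s x ⊓ y with hA
    set B := g t y ⊓ z with hB
    have hAdom : A ∈ dom s := hAd s x y hx
    have hAran : A ∈ ran t := hAr t _ y hy
    have hBdom : B ∈ dom t := hAd t y z hy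
    have hgArant : g t A ∈ dom t := hmapg t A hAran
    have hD : g t A ⊓ z ∈ dom t := hdomIdeal t inf_le_left hgArant
    -- g t A ≤ g t y
    have hgAgy : g t A ≤ g t y := hmonog t A y hAran hy inf_le_right
    -- rewrite D
    have hDrw : g t A ⊓ z = g t A ⊓ B := by
      rw [hB, ← inf_assoc, inf_eq_left.mpr hgAgy]
    have hfD : f t (g t A ⊓ z) = A ⊓ f t B := by
      rw [hDrw, hfmeet t _ _ hgArant hBdom, hfg t A hAran]
    have hftB_le_y : f t B ≤ y := by
      have h := hmonof t B (g t y) hBdom (hmapg t y hy) inf_le_left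
      rwa [hfg t y hy] at h
    have hfD2 : f t (g t A ⊓ z) = g s x ⊓ f t B := by
      rw [hfD, hA, inf_assoc, inf_eq_right.mpr hftB_le_y]
    have hfDdoms : f t (g t A ⊓ z) ∈ dom s := by
      rw [hfD2]; exact hdomIdeal s inf_le_left (hmapg s x hx)
    obtain ⟨_, heq⟩ := hpre s t (g t A ⊓ z) hD hfDdoms
    show (f (s * t) (g (s * t) (f s A) ⊓ z), s * t * u)
        = (f s (g s x ⊓ f t B), s * (t * u))
    rw [(hmulmem s t x y hx hy).2, heq, hfD2, mul_assoc]
  · -- identity laws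
    rintro ⟨x, s⟩ hp
    have hx : x ∈ ran s := hp
    constructor
    · show (f 1 (g 1 (⊤ : Y) ⊓ x), 1 * s) = (x, s)
      rw [h1f, h1g, one_mul, top_inf_eq]
    · show (f s (g s x ⊓ ⊤), s * 1) = (x, s)
      rw [inf_top_eq, hfg s x hx, mul_one]
  · -- x * x^* = x
    rintro ⟨x, s⟩ hp
    show (f s (g s x ⊓ g s x), s * 1) = (x, s)
    rw [inf_idem, hfg s x hp, mul_one]
  · -- star commutation
    rintro ⟨x, s⟩ hp ⟨y, t⟩ hq
    show (f 1 (g 1 (g s x) ⊓ g t y), (1 : T) * 1) = (f 1 (g 1 (g t y) ⊓ g s x), (1 : T) * 1)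
    rw [h1g, h1g, inf_comm]
  · -- (x * y^*)^* = x^* * y^*
    rintro ⟨x, s⟩ hp ⟨y, t⟩ hq
    have hx : x ∈ ran s := hp
    have hAdom : g s x ⊓ g t y ∈ dom s := hAd s x (g t y) hx
    show (g (s * 1) (f s (g s x ⊓ g t y)), (1 : T)) = (f 1 (g 1 (g s x) ⊓ g t y), 1 * 1)
    rw [mul_one, hgf s _ hAdom, h1f, h1g, one_mul]
  · -- x^* * y = y * (x * y)^*
    rintro ⟨x, s⟩ hp ⟨y, t⟩ hq
    have hx : x ∈ ran s := hp
    have hy : y ∈ ran t := hq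
    have hAran : g s x ⊓ y ∈ ran t := hAr t _ y hy
    have hgAgy : g t (g s x ⊓ y) ≤ g t y := hmonog t _ y hAran hy inf_le_right
    show (f 1 (g 1 (g s x) ⊓ y), 1 * t)
        = (f t (g t y ⊓ g (s * t) (f s (g s x ⊓ y))), t * 1)
    rw [h1g, one_mul, mul_one, (hmulmem s t x y hx hy).2,
      inf_eq_right.mpr hgAgy, hfg t _ hAran, h1f]
  · -- x^+ * x = x
    rintro ⟨x, s⟩ hp
    show (f 1 (g 1 x ⊓ x), 1 * s) = (x, s)
    rw [h1g, h1f, inf_idem, one_mul]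
  · -- plus commutation
    rintro ⟨x, s⟩ hp ⟨y, t⟩ hq
    show (f 1 (g 1 x ⊓ y), (1 : T) * 1) = (f 1 (g 1 y ⊓ x), (1 : T) * 1)
    rw [h1g, h1g, h1f, h1f, inf_comm]
  · -- (x^+ * y)^+ = x^+ * y^+
    rintro ⟨x, s⟩ hp ⟨y, t⟩ hq
    show (f 1 (g 1 x ⊓ y), (1 : T)) = (f 1 (g 1 x ⊓ y), 1 * 1)
    rw [one_mul]
  · -- x * y^+ = (x * y)^+ * x
    rintro ⟨x, s⟩ hp ⟨y, t⟩ hq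
    have hx : x ∈ ran s := hp
    have hle : f s (g s x ⊓ y) ≤ x := by
      have h := hmonof s _ (g s x) (hAd s x y hx) (hmapg s x hx) inf_le_left
      rwa [hfg s x hx] at h
    show (f s (g s x ⊓ y), s * 1) = (f 1 (g 1 (f s (g s x ⊓ y)) ⊓ x), 1 * s)
    rw [h1g, h1f, mul_one, one_mul, inf_eq_left.mpr hle]
  · -- (x^+)^* = x^+
    rintro ⟨x, s⟩ hp
    show ((g 1 x : Y), (1 : T)) = (x, 1)
    rw [h1g]
  · -- (x^*)^+ = x^*
    rintro ⟨x, s⟩ hp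
    rfl

end PartialActionProduct
end

section
/- In the restriction monoid M(T,Y) built by the partial action product construction, the relation (x,s) σ (y,t) ⟺ s = t is the least congruence identifying all projections, and M(T,Y)/σ is isomorphic to T. -/
open RestrictionMonoid

section PartialActionProduct

variable {T : Type*} [Monoid T] {Y : Type*} [SemilatticeInf Y] [OrderTop Y]

/-- In `M(T,Y)`, the relation `(x,s) σ (y,t) ⟺ s = t` is a congruence of
restriction monoids identifying all projections; it is the least such congruence;
and the projection to the second coordinate is surjective onto `T`, so
`M(T,Y)/σ ≅ T`. -/
theorem stmt16 (dom ran : T → Set Y) (f g : T → Y → Y)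
    (h1dom : dom (1 : T) = Set.univ) (h1ran : ran (1 : T) = Set.univ)
    (h1f : ∀ y : Y, f 1 y = y) (h1g : ∀ y : Y, g 1 y = y)
    (hmapf : ∀ t y, y ∈ dom t → f t y ∈ ran t)
    (hmapg : ∀ t y, y ∈ ran t → g t y ∈ dom t)
    (hgf : ∀ t y, y ∈ dom t → g t (f t y) = y)
    (hfg : ∀ t y, y ∈ ran t → f t (g t y) = y)
    (hpre : ∀ s t y, y ∈ dom t → f t y ∈ dom s →
      y ∈ dom (s * t) ∧ f (s * t) y = f s (f t y))
    (hdomIdeal : ∀ t : T, IsLowerSet (dom t)) (hranIdeal : ∀ t : T, IsLowerSet (ran t))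
    (horder : ∀ t x y, x ∈ dom t → y ∈ dom t → (x ≤ y ↔ f t x ≤ f t y))
    (hne : ∀ t : T, (dom t).Nonempty) :
    -- σ is a congruence compatible with the operations
    (∀ p ∈ Mset ran, ∀ q ∈ Mset ran, ∀ p' ∈ Mset ran, ∀ q' ∈ Mset ran,
      p.2 = p'.2 → q.2 = q'.2 → (pmul f g p q).2 = (pmul f g p' q').2) ∧
    (∀ p ∈ Mset ran, ∀ q ∈ Mset ran, p.2 = q.2 →
      (pstar g p).2 = (pstar g q).2 ∧ (pplus p).2 = (pplus q).2) ∧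
    -- σ identifies all projections
    (∀ p ∈ Mset ran, ∀ q ∈ Mset ran, (pstar g p).2 = (pstar g q).2) ∧
    -- σ is the least congruence identifying all projections
    (∀ r : Y × T → Y × T → Prop,
      (∀ p ∈ Mset ran, r p p) →
      (∀ p ∈ Mset ran, ∀ q ∈ Mset ran, r p q → r q p) →
      (∀ p ∈ Mset ran, ∀ q ∈ Mset ran, ∀ s ∈ Mset ran, r p q → r q s → r p s) →
      (∀ p ∈ Mset ran, ∀ q ∈ Mset ran, ∀ p' ∈ Mset ran, ∀ q' ∈ Mset ran,
        r p p' → r q q' → r (pmul f g p q) (pmul f g p' q')) →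
      (∀ p ∈ Mset ran, ∀ q ∈ Mset ran, r p q →
        r (pstar g p) (pstar g q) ∧ r (pplus p) (pplus q)) →
      (∀ p ∈ Mset ran, ∀ q ∈ Mset ran, r (pstar g p) (pstar g q)) →
      ∀ p ∈ Mset ran, ∀ q ∈ Mset ran, p.2 = q.2 → r p q) ∧
    -- the quotient is isomorphic to T: second projection is surjective
    (∀ t : T, ∃ p ∈ Mset ran, p.2 = t) := by
  refine ⟨?_, ?_, ?_, ?_, ?_⟩
  · intro p _ q _ p' _ q' _ h1 h2
    simp [pmul, h1, h2]
  · intro p _ q _ h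
    simp [pstar, pplus]
  · intro p _ q _
    simp [pstar]
  · intro r hrefl hsymm htrans hcong hstar hproj p hp q hq hst
    obtain ⟨x, s⟩ := p
    obtain ⟨y, t⟩ := q
    simp only at hst
    subst hst
    have hmem1 : ∀ z : Y, ((z, 1) : Y × T) ∈ Mset ran := by
      intro z; simp [Mset, h1ran]
    have hz : ((x ⊓ y, s) : Y × T) ∈ Mset ran :=
      hranIdeal s inf_le_left hp
    have hpr : ∀ a b : Y, r (a, 1) (b, 1) := by
      intro a b
      have := hproj (a, 1) (hmem1 a) (b, 1) (hmem1 b)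
      simpa [pstar, h1g] using this
    have h1 : r (x, s) (x ⊓ y, s) := by
      have := hcong (x, 1) (hmem1 x) (x, s) hp ((x ⊓ y), 1) (hmem1 _) (x, s) hp
        (hpr x (x ⊓ y)) (hrefl _ hp)
      simpa [pmul, h1f, h1g, inf_of_le_left (inf_le_left : x ⊓ y ≤ x)] using this
    have h2 : r (y, s) (x ⊓ y, s) := by
      have := hcong (y, 1) (hmem1 y) (y, s) hq ((x ⊓ y), 1) (hmem1 _) (y, s) hq
        (hpr y (x ⊓ y)) (hrefl _ hq)
      simpa [pmul, h1f, h1g, inf_of_le_left (inf_le_right : x ⊓ y ≤ y)] using this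
    exact htrans _ hp _ hz _ hq h1 (hsymm _ hq _ hz h2)
  · intro t
    obtain ⟨x, hx⟩ := hne t
    exact ⟨(f t x, t), hmapf t x hx, rfl⟩


end PartialActionProduct
end

section
/- Let M be a monoid and let ρ be the congruence defining the free inverse monoid on the set M (generated by a a⁻¹ a = a and commuting of idempotents a a⁻¹ b b⁻¹ = b b⁻¹ a a⁻¹). Define recursively D_u ∈ the free restriction monoid on M by D_ε = 1, D_{v·a} = (D_v ⌊a⌋)^* and D_{v·a⁻¹} = (⌊a⌋ D_v)^+. Then u ρ v implies D_u = D_v. -/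
open RestrictionMonoid

section FreeInverse

variable {M : Type*} [Monoid M]

/-- The interpretation `D_u` of a word `u` over `M ∪ M⁻¹` in a restriction monoid `S`
with generators `gen : M → S`:  `D_ε = 1`, `D_{v·[a]} = (D_v ⌊a⌋)^*`,
`D_{v·[a]⁻¹} = (⌊a⌋ D_v)^+`  (letters `[a]` are `Sum.inl a`, letters `[a]⁻¹` are
`Sum.inr a`). -/
def Dmap {S : Type*} [RestrictionMonoid S] (gen : M → S)
    (u : FreeMonoid (M ⊕ M)) : S :=
  u.toList.foldl
    (fun d w => match w with
      | Sum.inl a => RestrictionMonoid.rstar (d * gen a)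
      | Sum.inr a => RestrictionMonoid.rplus (gen a * d)) 1

/-- The pairs generating the congruence `ρ` defining the free inverse monoid on `M`:
`w w⁻¹ w = w` for every letter `w`, and `w w⁻¹ z z⁻¹ = z z⁻¹ w w⁻¹` for letters
`w, z` (the inverse of the letter `w` is `Sum.swap w`). -/
def baseRel : FreeMonoid (M ⊕ M) → FreeMonoid (M ⊕ M) → Prop := fun u v =>
  (∃ w : M ⊕ M, u = FreeMonoid.of w * FreeMonoid.of (Sum.swap w) * FreeMonoid.of w ∧
      v = FreeMonoid.of w) ∨
  (∃ w z : M ⊕ M,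
      u = FreeMonoid.of w * FreeMonoid.of (Sum.swap w) *
          (FreeMonoid.of z * FreeMonoid.of (Sum.swap z)) ∧
      v = FreeMonoid.of z * FreeMonoid.of (Sum.swap z) *
          (FreeMonoid.of w * FreeMonoid.of (Sum.swap w)))

/-- The inverse of a word: reverse it and swap each letter. -/
def invWord (u : FreeMonoid (M ⊕ M)) : FreeMonoid (M ⊕ M) :=
  FreeMonoid.ofList (u.toList.reverse.map Sum.swap)

section Aux

set_option linter.unusedSectionVars false

variable {S : Type*} [RestrictionMonoid S]

/-- The step function used in `Dmap`. -/
def rstep (gen : M → S) : S → (M ⊕ M) → S :=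
  fun d w => match w with
  | Sum.inl a => rstar (d * gen a)
  | Sum.inr a => rplus (gen a * d)

lemma isProj_rstar (x : S) : isProj (rstar x) := ⟨x, rfl⟩

lemma isProj_rplus (x : S) : isProj (rplus x) := ⟨rplus x, rstar_rplus x⟩

lemma isProj.rplus_eq {d : S} (h : isProj d) : rplus d = d := by
  obtain ⟨a, rfl⟩ := h; exact rplus_rstar a

lemma isProj.rstar_eq {d : S} (h : isProj d) : rstar d = d := by
  have h1 := h.rplus_eq
  have h2 := rstar_rplus d
  rw [h1] at h2; exact h2

lemma isProj_mul {d e : S} (hd : isProj d) (he : isProj e) : isProj (d * e) := by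
  obtain ⟨a, rfl⟩ := hd
  obtain ⟨b, rfl⟩ := he
  exact ⟨a * rstar b, rstar_mul_rstar a b⟩

lemma isProj_one : isProj (1 : S) := by
  refine ⟨1, ?_⟩
  have := mul_rstar (1 : S)
  rwa [one_mul] at this

lemma isProj_rstep (gen : M → S) (d : S) (w : M ⊕ M) : isProj (rstep gen d w) := by
  cases w with
  | inl a => exact isProj_rstar _
  | inr a => exact isProj_rplus _

lemma isProj_foldl (gen : M → S) (d : S) (hd : isProj d) (l : List (M ⊕ M)) :
    isProj (l.foldl (rstep gen) d) := by
  induction l generalizing d with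
  | nil => exact hd
  | cons w l ih => exact ih _ (isProj_rstep gen d w)

/-- `g * (d g)^* = d g` for a projection `d`. -/
lemma key_left {d : S} (hd : isProj d) (g : S) : g * rstar (d * g) = d * g := by
  have := rstar_left d g
  rw [hd.rstar_eq] at this
  exact this.symm

/-- `(g d)^+ * g = g d` for a projection `d`. -/
lemma key_right {d : S} (hd : isProj d) (g : S) : rplus (g * d) * g = g * d := by
  have := mul_rplus g d
  rw [hd.rplus_eq] at this
  exact this.symm

/-- The effect of a letter followed by its inverse:  multiplication by `g^+`. -/
lemma pair_inl {d : S} (hd : isProj d) (g : S) :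
    rplus (g * rstar (d * g)) = d * rplus g := by
  rw [key_left hd g]
  have : rplus (rplus d * g) = rplus d * rplus g := rplus_mul_rplus d g
  rwa [hd.rplus_eq] at this

/-- The effect of an inverse letter followed by the letter: multiplication by `g^*`. -/
lemma pair_inr {d : S} (hd : isProj d) (g : S) :
    rstar (rplus (g * d) * g) = d * rstar g := by
  rw [key_right hd g]
  obtain ⟨a, ha⟩ := hd
  calc rstar (g * d) = rstar (g * rstar a) := by rw [ha]
    _ = rstar g * rstar a := rstar_mul_rstar g a
    _ = rstar a * rstar g := rstar_comm g a
    _ = d * rstar g := by rw [ha]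

/-- The projection by which `F_w` multiplies. -/
def letterProj (gen : M → S) : M ⊕ M → S :=
  fun w => match w with
  | Sum.inl a => rplus (gen a)
  | Sum.inr a => rstar (gen a)

lemma isProj_letterProj (gen : M → S) (w : M ⊕ M) : isProj (letterProj gen w) := by
  cases w with
  | inl a => exact isProj_rplus _
  | inr a => exact isProj_rstar _

lemma letterProj_comm (gen : M → S) (w z : M ⊕ M) :
    letterProj gen w * letterProj gen z = letterProj gen z * letterProj gen w := by
  obtain ⟨a, ha⟩ := isProj_letterProj gen w
  obtain ⟨b, hb⟩ := isProj_letterProj gen z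
  rw [← ha, ← hb, rstar_comm]

lemma foldl_pair (gen : M → S) {d : S} (hd : isProj d) (w : M ⊕ M) :
    [w, Sum.swap w].foldl (rstep gen) d = d * letterProj gen w := by
  cases w with
  | inl a =>
    show rplus (gen a * rstar (d * gen a)) = d * rplus (gen a)
    exact pair_inl hd (gen a)
  | inr a =>
    show rstar (rplus (gen a * d) * gen a) = d * rstar (gen a)
    exact pair_inr hd (gen a)

lemma foldl_triple (gen : M → S) {d : S} (hd : isProj d) (w : M ⊕ M) :
    [w, Sum.swap w, w].foldl (rstep gen) d = [w].foldl (rstep gen) d := by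
  have h2 : [w, Sum.swap w, w].foldl (rstep gen) d
      = rstep gen (d * letterProj gen w) w := by
    have : [w, Sum.swap w, w].foldl (rstep gen) d
        = rstep gen ([w, Sum.swap w].foldl (rstep gen) d) w := rfl
    rw [this, foldl_pair gen hd w]
  rw [h2]
  cases w with
  | inl a =>
    show rstar (d * rplus (gen a) * gen a) = rstar (d * gen a)
    rw [mul_assoc, rplus_mul]
  | inr a =>
    show rplus (gen a * (d * rstar (gen a))) = rplus (gen a * d)
    have : gen a * (d * rstar (gen a)) = gen a * d := by
      obtain ⟨b, hb⟩ := isProj_rstar (gen a)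
      have hcomm : d * rstar (gen a) = rstar (gen a) * d := by
        obtain ⟨c, hc⟩ := (show isProj d from hd)
        rw [← hc, rstar_comm]
      rw [hcomm, ← mul_assoc, mul_rstar]
    rw [this]

end Aux

/-- The strengthened statement: folds from any projection agree. -/
lemma stmt18_aux (u v : FreeMonoid (M ⊕ M)) (h : conGen baseRel u v) :
    ∀ (S : Type*) [RestrictionMonoid S] (gen : M → S) (d : S), isProj d →
      u.toList.foldl (rstep gen) d = v.toList.foldl (rstep gen) d := by
  induction h with
  | of u v huv =>
    intro S _ gen d hd
    rcases huv with ⟨w, rfl, rfl⟩ | ⟨w, z, rfl, rfl⟩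
    · have h1 : (FreeMonoid.of w * FreeMonoid.of (Sum.swap w) *
          FreeMonoid.of w).toList = [w, Sum.swap w, w] := rfl
      have h2 : (FreeMonoid.of w : FreeMonoid (M ⊕ M)).toList = [w] := rfl
      rw [h1, h2]
      exact foldl_triple gen hd w
    · have h1 : (FreeMonoid.of w * FreeMonoid.of (Sum.swap w) *
          (FreeMonoid.of z * FreeMonoid.of (Sum.swap z))).toList
          = [w, Sum.swap w] ++ [z, Sum.swap z] := rfl
      have h2 : (FreeMonoid.of z * FreeMonoid.of (Sum.swap z) *
          (FreeMonoid.of w * FreeMonoid.of (Sum.swap w))).toList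
          = [z, Sum.swap z] ++ [w, Sum.swap w] := rfl
      rw [h1, h2, List.foldl_append, List.foldl_append,
        foldl_pair gen hd w, foldl_pair gen hd z,
        foldl_pair gen (isProj_mul hd (isProj_letterProj gen w)) z,
        foldl_pair gen (isProj_mul hd (isProj_letterProj gen z)) w,
        mul_assoc, mul_assoc, letterProj_comm]
  | refl x => intro S _ gen d hd; rfl
  | symm _ ih => intro S _ gen d hd; exact (ih S gen d hd).symm
  | trans _ _ ih1 ih2 =>
    intro S _ gen d hd
    exact (ih1 S gen d hd).trans (ih2 S gen d hd)
  | mul _ _ ih1 ih2 =>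
    intro S _ gen d hd
    rw [FreeMonoid.toList_mul, FreeMonoid.toList_mul, List.foldl_append,
      List.foldl_append, ih1 S gen d hd, ih2 S gen _ (isProj_foldl gen _ hd _)]

/-- If `u ρ v`, where `ρ` is the congruence defining the free inverse monoid on `M`,
then `D_u = D_v` in the free restriction monoid on `M` (equivalently, under every
interpretation of the generators in every restriction monoid). -/
theorem stmt18 (u v : FreeMonoid (M ⊕ M)) (h : conGen baseRel u v) :
    ∀ (S : Type*) [RestrictionMonoid S] (gen : M → S), Dmap gen u = Dmap gen v := by
  intro S _ gen
  exact stmt18_aux u v h S gen 1 isProj_one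

end FreeInverse
end

section
/- Let M be a monoid, FI(M) the free inverse monoid on the underlying set of M, and u ↦ D_u the map into the free restriction monoid FR(M) defined by D_1 = 1, D_{v[a]} = (D_v ⌊a⌋)^*, D_{v[a]⁻¹} = (⌊a⌋ D_v)^+. Then: (i) D_u = D_{u⁻¹u} for every u ∈ FI(M), and (ii) D_{ef} = D_e D_f for any two idempotents e, f of FI(M). -/
open RestrictionMonoid

section FreeInverse

variable {M : Type*} [Monoid M]

section Development

namespace RestrictionMonoid

variable {S : Type*} [RestrictionMonoid S]

lemma rstar_one : rstar (1 : S) = 1 := by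
  simpa only [one_mul] using mul_rstar (1 : S)

lemma rstar_rstar (x : S) : rstar (rstar x) = rstar x := by
  rw [← rplus_rstar x, rstar_rplus]

lemma rplus_of_rstar_eq {a : S} (ha : rstar a = a) : rplus a = a := by
  rw [← ha, rplus_rstar]

lemma mul_comm_of_rstar_eq {a b : S} (ha : rstar a = a) (hb : rstar b = b) :
    a * b = b * a := by
  rw [← ha, ← hb, rstar_comm]

lemma rstar_mul_of_rstar_eq (x : S) {b : S} (hb : rstar b = b) :
    rstar (x * b) = rstar x * b := by
  rw [← hb, rstar_mul_rstar]

lemma rstar_mul_eq_of_rstar_eq {a b : S} (ha : rstar a = a) (hb : rstar b = b) :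
    rstar (a * b) = a * b := by
  rw [rstar_mul_of_rstar_eq a hb, ha]

lemma rplus_mul_of_rstar_eq {a : S} (ha : rstar a = a) (x : S) :
    rplus (a * x) = a * rplus x := by
  rw [← rplus_of_rstar_eq ha, rplus_mul_rplus]

lemma mul_rstar_mul_of_rstar_eq {a : S} (ha : rstar a = a) (x : S) :
    x * rstar (a * x) = a * x := by
  rw [← rstar_left, ha]

lemma rplus_mul_mul_of_rstar_eq {a : S} (ha : rstar a = a) (x : S) :
    rplus (x * a) * x = x * a := by
  rw [← mul_rplus, rplus_of_rstar_eq ha]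

lemma rstar_mul_mul_rstar (x y : S) : rstar (x * y) * rstar y = rstar (x * y) := by
  rw [← rstar_mul_of_rstar_eq _ (rstar_rstar y), mul_assoc, mul_rstar]

lemma rplus_mul_rplus_mul (x y : S) : rplus (y * x) * rplus y = rplus (y * x) := by
  rw [rplus_comm, ← rplus_mul_rplus, ← mul_assoc, rplus_mul]

end RestrictionMonoid

open RestrictionMonoid

variable {α S : Type*} [RestrictionMonoid S] (gen : α → S)

def Dstep (d : S) : α ⊕ α → S
  | Sum.inl a => rstar (d * gen a)
  | Sum.inr a => rplus (gen a * d)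

def Dfold (d : S) (l : List (α ⊕ α)) : S := l.foldl (Dstep gen) d

/-- `Dfold` along the inverse word (see `Dfold_invWord`). -/
def DfoldInv (d : S) (l : List (α ⊕ α)) : S := l.foldr (fun w d => Dstep gen d w.swap) d

lemma Dfold_cons (d : S) (w : α ⊕ α) (l : List (α ⊕ α)) :
    Dfold gen d (w :: l) = Dfold gen (Dstep gen d w) l := rfl

lemma Dfold_append (d : S) (l₁ l₂ : List (α ⊕ α)) :
    Dfold gen d (l₁ ++ l₂) = Dfold gen (Dfold gen d l₁) l₂ := List.foldl_append

lemma DfoldInv_cons (d : S) (w : α ⊕ α) (l : List (α ⊕ α)) :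
    DfoldInv gen d (w :: l) = Dstep gen (DfoldInv gen d l) w.swap := rfl

lemma DfoldInv_append (d : S) (l₁ l₂ : List (α ⊕ α)) :
    DfoldInv gen d (l₁ ++ l₂) = DfoldInv gen (DfoldInv gen d l₂) l₁ := List.foldr_append

lemma Dfold_invWord (d : S) (u : FreeMonoid (α ⊕ α)) :
    Dfold gen d (invWord u).toList = DfoldInv gen d u.toList := by
  rw [invWord, FreeMonoid.toList_ofList, Dfold, DfoldInv, List.foldl_map, List.foldl_reverse]

lemma rstar_Dstep (d : S) (w : α ⊕ α) : rstar (Dstep gen d w) = Dstep gen d w := by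
  cases w with
  | inl a => exact rstar_rstar _
  | inr a => exact rstar_rplus _

lemma rstar_Dfold {d : S} (hd : rstar d = d) (l : List (α ⊕ α)) :
    rstar (Dfold gen d l) = Dfold gen d l := by
  induction l generalizing d with
  | nil => exact hd
  | cons w l ih => exact ih (rstar_Dstep gen d w)

lemma rstar_DfoldInv {d : S} (hd : rstar d = d) (l : List (α ⊕ α)) :
    rstar (DfoldInv gen d l) = DfoldInv gen d l := by
  cases l with
  | nil => exact hd
  | cons w l => exact rstar_Dstep gen _ _

lemma Dstep_mul {d f : S} (hd : rstar d = d) (hf : rstar f = f) (w : α ⊕ α) :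
    Dstep gen d w * f = Dstep gen (d * Dstep gen f w.swap) w := by
  cases w with
  | inl a =>
    change rstar (d * gen a) * f = rstar (d * rplus (gen a * f) * gen a)
    rw [mul_assoc, rplus_mul_mul_of_rstar_eq hf, ← mul_assoc, rstar_mul_of_rstar_eq _ hf]
  | inr a =>
    change rplus (gen a * d) * f = rplus (gen a * (d * rstar (f * gen a)))
    rw [mul_comm_of_rstar_eq hd (rstar_rstar _), ← mul_assoc, mul_rstar_mul_of_rstar_eq hf,
      mul_assoc, rplus_mul_of_rstar_eq hf, mul_comm_of_rstar_eq (rstar_rplus _) hf]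

lemma Dstep_mul_Dstep_one (d : S) (w : α ⊕ α) :
    Dstep gen d w * Dstep gen 1 w = Dstep gen d w := by
  cases w with
  | inl a =>
    change rstar (d * gen a) * rstar (1 * gen a) = rstar (d * gen a)
    rw [one_mul, rstar_mul_mul_rstar]
  | inr a =>
    change rplus (gen a * d) * rplus (gen a * 1) = rplus (gen a * d)
    rw [mul_one, rplus_mul_rplus_mul]

lemma Dstep_retrace {d : S} (hd : rstar d = d) (w : α ⊕ α) :
    Dstep gen (Dstep gen (Dstep gen d w) w.swap) w = Dstep gen d w := by
  cases w with
  | inl a =>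
    change rstar (rplus (gen a * rstar (d * gen a)) * gen a) = rstar (d * gen a)
    rw [rplus_mul_mul_of_rstar_eq (rstar_rstar _), rstar_mul_of_rstar_eq _ (rstar_rstar _),
      rstar_comm, rstar_mul_mul_rstar]
  | inr a =>
    change rplus (gen a * rstar (rplus (gen a * d) * gen a)) = rplus (gen a * d)
    rw [rplus_mul_mul_of_rstar_eq hd, rstar_mul_of_rstar_eq _ hd, ← mul_assoc, mul_rstar]

lemma Dstep_loop {d : S} (hd : rstar d = d) (w : α ⊕ α) :
    Dstep gen (Dstep gen d w) w.swap = Dstep gen (Dstep gen 1 w) w.swap * d := by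
  rw [Dstep_mul gen (rstar_Dstep gen 1 w) hd, Sum.swap_swap,
    mul_comm_of_rstar_eq (rstar_Dstep gen 1 w) (rstar_Dstep gen d w), Dstep_mul_Dstep_one]

lemma Dstep_loop_comm {d : S} (hd : rstar d = d) (w z : α ⊕ α) :
    Dstep gen (Dstep gen (Dstep gen (Dstep gen d w) w.swap) z) z.swap =
      Dstep gen (Dstep gen (Dstep gen (Dstep gen d z) z.swap) w) w.swap := by
  have hloop (v : α ⊕ α) := rstar_Dstep gen (Dstep gen 1 v) v.swap
  rw [Dstep_loop gen hd w, Dstep_loop gen hd z,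
    Dstep_loop gen (rstar_mul_eq_of_rstar_eq (hloop w) hd) z,
    Dstep_loop gen (rstar_mul_eq_of_rstar_eq (hloop z) hd) w,
    ← mul_assoc, ← mul_assoc, mul_comm_of_rstar_eq (hloop z) (hloop w)]

lemma DfoldInv_eq_of_conGen {u v : FreeMonoid (α ⊕ α)} (h : conGen baseRel u v) :
    ∀ {d : S}, rstar d = d → DfoldInv gen d u.toList = DfoldInv gen d v.toList := by
  induction h with
  | of x y hxy =>
    intro d hd
    rcases hxy with ⟨w, rfl, rfl⟩ | ⟨w, z, rfl, rfl⟩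
    · exact Dstep_retrace gen hd w.swap
    · change Dstep gen (Dstep gen (Dstep gen (Dstep gen d z.swap.swap) z.swap) w.swap.swap) w.swap =
        Dstep gen (Dstep gen (Dstep gen (Dstep gen d w.swap.swap) w.swap) z.swap.swap) z.swap
      rw [Sum.swap_swap, Sum.swap_swap]
      exact Dstep_loop_comm gen hd z w
  | refl x => exact fun _ => rfl
  | symm _ ih => exact fun hd => (ih hd).symm
  | trans _ _ ih₁ ih₂ => exact fun hd => (ih₁ hd).trans (ih₂ hd)
  | mul _ _ ih₁ ih₂ =>
    intro d hd
    rw [FreeMonoid.toList_mul, FreeMonoid.toList_mul, DfoldInv_append, DfoldInv_append, ih₂ hd,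
      ih₁ (rstar_DfoldInv gen hd _)]

lemma Dfold_mul (l : List (α ⊕ α)) {d f : S} (hd : rstar d = d) (hf : rstar f = f) :
    Dfold gen d l * f = Dfold gen (d * DfoldInv gen f l) l := by
  induction l generalizing d with
  | nil => rfl
  | cons w l ih =>
    rw [Dfold_cons, ih (rstar_Dstep gen d w), Dstep_mul gen hd (rstar_DfoldInv gen hf l),
      ← DfoldInv_cons, ← Dfold_cons]

lemma DfoldInv_mul (l : List (α ⊕ α)) {d f : S} (hd : rstar d = d) (hf : rstar f = f) :
    DfoldInv gen d l * f = DfoldInv gen (d * Dfold gen f l) l := by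
  induction l generalizing f with
  | nil => rfl
  | cons w l ih =>
    rw [DfoldInv_cons, Dstep_mul gen (rstar_DfoldInv gen hd l) hf, Sum.swap_swap,
      ih (rstar_Dstep gen f w), ← Dfold_cons, ← DfoldInv_cons]

lemma Dfold_one_mul (l : List (α ⊕ α)) {f : S} (hf : rstar f = f) :
    Dfold gen 1 l * f = Dfold gen (DfoldInv gen f l) l := by
  rw [Dfold_mul gen l rstar_one hf, one_mul]

lemma Dfold_mul_Dfold_one (l : List (α ⊕ α)) {d : S} (hd : rstar d = d) :
    Dfold gen d l * Dfold gen 1 l = Dfold gen d l := by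
  have h := DfoldInv_mul gen l rstar_one rstar_one
  rw [one_mul, mul_one] at h
  rw [Dfold_mul gen l hd (rstar_Dfold gen rstar_one l), ← h, ← Dfold_mul gen l hd rstar_one,
    mul_one]

lemma Dfold_eq_Dfold_one_mul_of_idem {f : FreeMonoid (α ⊕ α)} (hf : conGen baseRel (f * f) f)
    {d : S} (hd : rstar d = d) : Dfold gen d f.toList = Dfold gen 1 f.toList * d := by
  set l := f.toList
  have hidem {g : S} (hg : rstar g = g) : DfoldInv gen (DfoldInv gen g l) l = DfoldInv gen g l := by
    simpa only [FreeMonoid.toList_mul, DfoldInv_append] using DfoldInv_eq_of_conGen gen hf hg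
  have hfix {g : S} (hg : rstar g = g) : Dfold gen 1 l * DfoldInv gen g l = Dfold gen 1 l * g := by
    rw [Dfold_one_mul gen l (rstar_DfoldInv gen hg l), hidem hg, Dfold_one_mul gen l hg]
  have hinv : DfoldInv gen 1 l * d = DfoldInv gen (Dfold gen d l) l := by
    rw [DfoldInv_mul gen l rstar_one hd, one_mul]
  calc Dfold gen d l
      = Dfold gen 1 l * Dfold gen d l := by
        rw [mul_comm_of_rstar_eq (rstar_Dfold gen rstar_one l) (rstar_Dfold gen hd l),
          Dfold_mul_Dfold_one gen l hd]
    _ = Dfold gen 1 l * DfoldInv gen 1 l * d := by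
        rw [← hfix (rstar_Dfold gen hd l), ← hinv, mul_assoc]
    _ = Dfold gen 1 l * d := by rw [hfix rstar_one, mul_one]

end Development

-- `FI(M)` is modelled by words modulo `conGen baseRel`, and an equation in `FR(M)` by the same
-- equation under every `gen : M → S` into every restriction monoid `S`.
/-- In the free inverse monoid `FI(M)` (words modulo the congruence `ρ = conGen baseRel`)
with the map `u ↦ D_u` into the free restriction monoid `FR(M)` (equality in `FR(M)`
being equality under every interpretation in every restriction monoid):
(i) `D_u = D_{u⁻¹ u}` for every `u`, and
(ii) `D_{e f} = D_e D_f` for any two idempotents `e`, `f` of `FI(M)`. -/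
theorem stmt19 :
    (∀ u : FreeMonoid (M ⊕ M), ∀ (S : Type*) [RestrictionMonoid S] (gen : M → S),
      Dmap gen (invWord u * u) = Dmap gen u) ∧
    (∀ e f : FreeMonoid (M ⊕ M), conGen baseRel (e * e) e → conGen baseRel (f * f) f →
      ∀ (S : Type*) [RestrictionMonoid S] (gen : M → S),
        Dmap gen (e * f) = Dmap gen e * Dmap gen f) := by
  refine ⟨fun u S _ gen => ?_, fun e f _ hf S _ gen => ?_⟩
  · change Dfold gen 1 (invWord u * u).toList = Dfold gen 1 u.toList
    rw [FreeMonoid.toList_mul, Dfold_append, Dfold_invWord, ← Dfold_one_mul gen _ rstar_one,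
      mul_one]
  · change Dfold gen 1 (e * f).toList = Dfold gen 1 e.toList * Dfold gen 1 f.toList
    rw [FreeMonoid.toList_mul, Dfold_append,
      Dfold_eq_Dfold_one_mul_of_idem gen hf (rstar_Dfold gen rstar_one _),
      mul_comm_of_rstar_eq (rstar_Dfold gen rstar_one _) (rstar_Dfold gen rstar_one _)]

end FreeInverse
end
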